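/- arXiv:2503.14264 — 6 statements merged into one kernel-verified Lean document; each statement's English description precedes it below -/
import Mathlib

section
/- The sequence (u_n) defined by u₀ = 1/64, u₁ = 11/768 and the recurrence 4(n+3)(n+4)² u_{n+2} = (n+3)(8n² + 48n + 73) u_{n+1} − (n+2)(2n+5)² u_n for all n ≥ 0 satisfies u_n > 0 for all n ∈ ℕ. -/
theorem stmt_7 (u : ℕ → ℝ) (h0 : u 0 = 1 / 64) (h1 : u 1 = 11 / 768)
    (hrec : ∀ n : ℕ,
      4 * ((n : ℝ) + 3) * ((n : ℝ) + 4) ^ 2 * u (n + 2) =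
        ((n : ℝ) + 3) * (8 * (n : ℝ) ^ 2 + 48 * (n : ℝ) + 73) * u (n + 1) -
          ((n : ℝ) + 2) * (2 * (n : ℝ) + 5) ^ 2 * u n) :
    ∀ n, 0 < u n := by
  have key : ∀ n : ℕ, 0 < u n ∧
      0 < ((n : ℝ) + 3) * u (n + 1) - ((n : ℝ) + 2) * u n := by
    intro n
    induction n with
    | zero =>
      constructor <;> · simp only [h0, h1]; norm_num
    | succ k ih =>
      obtain ⟨hu, hw⟩ := ih
      have hr := hrec k
      have hk : (0:ℝ) ≤ (k : ℝ) := Nat.cast_nonneg k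
      have hu1 : 0 < u (k + 1) := by nlinarith [hw, hu]
      have hid : 4 * ((k:ℝ) + 3) * ((k:ℝ) + 4) *
          (((k:ℝ) + 4) * u (k + 2) - ((k:ℝ) + 3) * u (k + 1)) =
          (2 * (k:ℝ) + 5) ^ 2 * (((k:ℝ) + 3) * u (k + 1) - ((k:ℝ) + 2) * u k) := by
        linear_combination hr
      have hpos : 0 < (2 * (k:ℝ) + 5) ^ 2 * (((k:ℝ) + 3) * u (k + 1) - ((k:ℝ) + 2) * u k) :=
        mul_pos (by positivity) hw
      have hw1 : 0 < ((k:ℝ) + 4) * u (k + 2) - ((k:ℝ) + 3) * u (k + 1) := by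
        nlinarith [hid, hpos, hk]
      refine ⟨hu1, ?_⟩
      push_cast
      have e : k + 1 + 1 = k + 2 := rfl
      rw [e]
      nlinarith [hw1]
  intro n
  exact (key n).1
end

section
/- For every natural number n ≥ 1, the Legendre polynomials satisfy the Turán inequality at x = 1/2: P_n(1/2)² − P_{n−1}(1/2)·P_{n+1}(1/2) ≥ 0. -/
theorem stmt_8 (P : ℕ → ℝ → ℝ)
    (h0 : ∀ x, P 0 x = 1) (h1 : ∀ x, P 1 x = x)
    (hrec : ∀ (k : ℕ) (x : ℝ),
      ((k : ℝ) + 2) * P (k + 2) x = (2 * (k : ℝ) + 3) * x * P (k + 1) x - ((k : ℝ) + 1) * P k x) :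
    ∀ n : ℕ, 1 ≤ n →
      0 ≤ P n (1 / 2) ^ 2 - P (n - 1) (1 / 2) * P (n + 1) (1 / 2) := by
  intro n hn
  obtain ⟨m, rfl⟩ : ∃ m, n = m + 1 := ⟨n - 1, (Nat.succ_pred_eq_of_pos hn).symm⟩
  simp only [Nat.add_sub_cancel]
  have h := hrec m (1 / 2)
  set a := P (m + 1) (1 / 2)
  set b := P m (1 / 2)
  set c := P (m + 1 + 1) (1 / 2) with hc
  have h' : ((m : ℝ) + 2) * c = (2 * (m : ℝ) + 3) * (1 / 2) * a - ((m : ℝ) + 1) * b := h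
  have hm : (0 : ℝ) ≤ (m : ℝ) := Nat.cast_nonneg m
  have hbc : ((m : ℝ) + 2) * (b * c) =
      (2 * (m : ℝ) + 3) * (1 / 2) * (a * b) - ((m : ℝ) + 1) * b ^ 2 := by
    rw [show ((m : ℝ) + 2) * (b * c) = b * (((m : ℝ) + 2) * c) by ring, h']; ring
  have key : 0 ≤ ((m : ℝ) + 2) * (a ^ 2 - b * c) := by
    nlinarith [sq_nonneg (a - b), sq_nonneg (2 * a - b), sq_nonneg a, sq_nonneg b,
      mul_nonneg hm (sq_nonneg (a - b)), mul_nonneg hm (sq_nonneg a),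
      mul_nonneg hm (sq_nonneg b)]
  have hpos : (0 : ℝ) < (m : ℝ) + 2 := by linarith
  nlinarith [key, hpos]
end

section
/- Let λ₁, …, λ_d be distinct complex numbers with λ₁ real, λ₁ > |λ_i| for i ≥ 2, and the non-real λ_i occurring in conjugate pairs. Define V_i = (1, λ_i, λ_i², …, λ_i^{d−1}) ∈ ℂ^d and K = { a·d·V₁ + Σ_{i=2}^d α_i V_i : a ≥ |α_i| for all i, α_i = conj(α_j) whenever λ_i = conj(λ_j), α_i ∈ ℝ if λ_i ∈ ℝ }. Then K ⊆ ℝ^d, K is closed under addition and nonnegative scaling, and every nonzero element of K has all coordinates strictly positive. -/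
open scoped ComplexConjugate

theorem stmt_11 (d : ℕ) (hd : 0 < d) (l1 : ℝ) (lam : Fin d → ℂ)
    (hlam0 : lam ⟨0, hd⟩ = (l1 : ℂ))
    (hinj : Function.Injective lam)
    (hdom : ∀ i : Fin d, i ≠ ⟨0, hd⟩ → ‖lam i‖ < l1)
    (hconj : ∀ i : Fin d, ∃ j : Fin d, lam j = conj (lam i))
    (V : Fin d → Fin d → ℂ) (hV : ∀ i ℓ, V i ℓ = lam i ^ (ℓ : ℕ))
    (K : Set (Fin d → ℂ))
    (hK : K = {x | ∃ (a : ℝ) (α : Fin d → ℂ), 0 ≤ a ∧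
      (∀ i : Fin d, i ≠ ⟨0, hd⟩ → ‖α i‖ ≤ a) ∧
      (∀ i j : Fin d, i ≠ ⟨0, hd⟩ → j ≠ ⟨0, hd⟩ → lam i = conj (lam j) → α i = conj (α j)) ∧
      (∀ i : Fin d, i ≠ ⟨0, hd⟩ → (lam i).im = 0 → (α i).im = 0) ∧
      x = (a * d : ℂ) • V ⟨0, hd⟩ + ∑ i ∈ Finset.univ.erase ⟨0, hd⟩, α i • V i}) :
    (∀ x ∈ K, ∀ ℓ : Fin d, (x ℓ).im = 0) ∧
    (∀ x ∈ K, ∀ y ∈ K, x + y ∈ K) ∧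
    (∀ x ∈ K, ∀ c : ℝ, 0 ≤ c → (c : ℂ) • x ∈ K) ∧
    (∀ x ∈ K, x ≠ 0 → ∀ ℓ : Fin d, 0 < (x ℓ).re) := by
  subst hK
  set e0 : Fin d := ⟨0, hd⟩ with he0
  set s : Finset (Fin d) := Finset.univ.erase e0 with hs
  choose σ hσ using hconj
  have hσinv : Function.Involutive σ := by
    intro i
    apply hinj
    rw [hσ, hσ, Complex.conj_conj]
  have hσ0 : ∀ i : Fin d, σ i = e0 ↔ i = e0 := by
    intro i
    constructor
    · intro h
      apply hinj
      have := hσ i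
      rw [h, hlam0] at this
      rw [hlam0, ← Complex.conj_conj (lam i), ← this, Complex.conj_ofReal]
    · intro h
      subst h
      apply hinj
      rw [hσ, hlam0, Complex.conj_ofReal]
  have hσs : ∀ i : Fin d, i ∈ s ↔ σ i ∈ s := by
    intro i
    simp only [hs, Finset.mem_erase, Finset.mem_univ, and_true]
    exact (not_congr (hσ0 i)).symm
  -- realness of the sum
  have hreal : ∀ (α : Fin d → ℂ),
      (∀ i j : Fin d, i ≠ e0 → j ≠ e0 → lam i = conj (lam j) → α i = conj (α j)) →
      ∀ ℓ : ℕ, conj (∑ i ∈ s, α i * lam i ^ ℓ) = ∑ i ∈ s, α i * lam i ^ ℓ := by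
    intro α hα ℓ
    rw [map_sum]
    refine Finset.sum_equiv (hσinv.toPerm) (fun i => by
      simpa [Function.Involutive.toPerm] using hσs i) ?_
    intro i hi
    have hi0 : i ≠ e0 := (Finset.mem_erase.mp hi).1
    have hσi0 : σ i ≠ e0 := fun h => hi0 ((hσ0 i).mp h)
    have hασ : α (σ i) = conj (α i) := by
      apply hα (σ i) i hσi0 hi0
      rw [hσ]
    simp only [Function.Involutive.toPerm, Equiv.coe_fn_mk]
    rw [map_mul, map_pow, ← hσ, hασ]
  -- coordinate formula
  have hcoord : ∀ (a : ℝ) (α : Fin d → ℂ) (x : Fin d → ℂ),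
      x = (a * d : ℂ) • V e0 + ∑ i ∈ s, α i • V i →
      ∀ ℓ : Fin d, x ℓ = ((a * d * l1 ^ (ℓ : ℕ) : ℝ) : ℂ) + ∑ i ∈ s, α i * lam i ^ (ℓ : ℕ) := by
    intro a α x hx ℓ
    rw [hx]
    simp only [Pi.add_apply, Pi.smul_apply, Finset.sum_apply, smul_eq_mul, hV, hlam0]
    push_cast
    ring
  refine ⟨?_, ?_, ?_, ?_⟩
  · -- im = 0
    rintro x ⟨a, α, ha, hab, hα, -, hx⟩ ℓ
    rw [hcoord a α x hx ℓ]
    have hS := hreal α hα (ℓ : ℕ)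
    rw [Complex.conj_eq_iff_im] at hS
    rw [Complex.add_im, Complex.ofReal_im, zero_add]
    exact hS
  · -- addition
    rintro x ⟨a, α, ha, hab, hα, hαim, hx⟩ y ⟨b, β, hb, hbb, hβ, hβim, hy⟩
    refine ⟨a + b, α + β, add_nonneg ha hb, ?_, ?_, ?_, ?_⟩
    · intro i hi
      calc ‖α i + β i‖ ≤ ‖α i‖ + ‖β i‖ :=
            norm_add_le _ _
        _ ≤ a + b := add_le_add (hab i hi) (hbb i hi)
    · intro i j hi hj hij
      simp only [Pi.add_apply, map_add]
      rw [hα i j hi hj hij, hβ i j hi hj hij]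
    · intro i hi him
      simp only [Pi.add_apply, Complex.add_im]
      rw [hαim i hi him, hβim i hi him, add_zero]
    · rw [hx, hy]
      have h1 : (((a + b : ℝ) : ℂ) * (d : ℂ)) • V e0
          = ((a : ℂ) * d) • V e0 + ((b : ℂ) * d) • V e0 := by
        push_cast
        rw [add_mul, add_smul]
      have h2 : ∑ i ∈ s, (α + β) i • V i
          = (∑ i ∈ s, α i • V i) + ∑ i ∈ s, β i • V i := by
        rw [← Finset.sum_add_distrib]
        exact Finset.sum_congr rfl fun i _ => by simp [add_smul]
      rw [h1, h2]
      abel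
  · -- scaling
    rintro x ⟨a, α, ha, hab, hα, hαim, hx⟩ c hc
    refine ⟨c * a, fun i => (c : ℂ) * α i, mul_nonneg hc ha, ?_, ?_, ?_, ?_⟩
    · intro i hi
      rw [norm_mul, Complex.norm_real, Real.norm_eq_abs, abs_of_nonneg hc]
      exact mul_le_mul_of_nonneg_left (hab i hi) hc
    · intro i j hi hj hij
      show (c : ℂ) * α i = conj ((c : ℂ) * α j)
      rw [hα i j hi hj hij, map_mul, Complex.conj_ofReal]
    · intro i hi him
      have := hαim i hi him
      show ((c : ℂ) * α i).im = 0
      simp [Complex.mul_im, this]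
    · rw [hx, smul_add, smul_smul, Finset.smul_sum]
      push_cast
      congr 1
      · ring_nf
      · exact Finset.sum_congr rfl fun i _ => by rw [smul_smul]
  · -- positivity
    rintro x ⟨a, α, ha, hab, hα, hαim, hx⟩ hx0 ℓ
    -- a > 0
    have hapos : 0 < a := by
      rcases lt_or_eq_of_le ha with h | h
      · exact h
      · exfalso
        apply hx0
        have hα0 : ∀ i ∈ s, α i = 0 := by
          intro i hi
          have := hab i (Finset.mem_erase.mp hi).1
          rw [← h] at this
          exact norm_eq_zero.mp (le_antisymm this (norm_nonneg _))
        rw [hx, ← h]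
        funext j
        simp only [Pi.add_apply, Pi.smul_apply, Finset.sum_apply, Pi.zero_apply]
        rw [Finset.sum_eq_zero fun i hi => by rw [hα0 i hi]; simp]
        simp
    have hl1pos : 0 < l1 ^ (ℓ : ℕ) := by
      rcases Nat.eq_zero_or_pos (ℓ : ℕ) with h | h
      · rw [h]; norm_num
      · have hd2 : 1 < d := lt_of_le_of_lt h ℓ.isLt
        have hi1 : (⟨1, hd2⟩ : Fin d) ≠ e0 := by
          rw [he0, Ne, Fin.mk.injEq]
          norm_num
        have := hdom ⟨1, hd2⟩ hi1
        exact pow_pos (lt_of_le_of_lt (norm_nonneg _) this) _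
    -- bound on the sum
    set S : ℂ := ∑ i ∈ s, α i * lam i ^ (ℓ : ℕ) with hS
    have hSbound : ‖S‖ ≤ (d - 1 : ℝ) * (a * l1 ^ (ℓ : ℕ)) := by
      calc ‖S‖ ≤ ∑ i ∈ s, ‖α i * lam i ^ (ℓ : ℕ)‖ :=
            norm_sum_le _ _
        _ ≤ ∑ i ∈ s, a * l1 ^ (ℓ : ℕ) := by
            apply Finset.sum_le_sum
            intro i hi
            have hi0 : i ≠ e0 := (Finset.mem_erase.mp hi).1
            rw [norm_mul, norm_pow]
            apply mul_le_mul (hab i hi0) (pow_le_pow_left₀ (norm_nonneg _)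
              (le_of_lt (hdom i hi0)) _) (pow_nonneg (norm_nonneg _) _) ha
        _ = (d - 1 : ℝ) * (a * l1 ^ (ℓ : ℕ)) := by
            rw [Finset.sum_const, nsmul_eq_mul]
            congr 1
            rw [hs, Finset.card_erase_of_mem (Finset.mem_univ _), Finset.card_univ,
              Fintype.card_fin]
            rw [Nat.cast_sub hd, Nat.cast_one]
    have hSre : -((d - 1 : ℝ) * (a * l1 ^ (ℓ : ℕ))) ≤ S.re := by
      have h1 := Complex.abs_re_le_norm S
      have h2 := neg_abs_le S.re
      linarith
    have hxl := hcoord a α x hx ℓ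
    rw [hxl]
    simp only [Complex.add_re, Complex.ofReal_re]
    have : (d : ℝ) ≥ 1 := by exact_mod_cast hd
    nlinarith [mul_pos hapos hl1pos]
end

section
/- Let λ₁ > |λ₂| > 0 and let C₁ = { α ∈ ℂ^d : α₁ = λ₁, |α_i| ≤ |λ₂| for i ≥ 2 } and C₂ = { β ∈ ℂ^d : β₁ ∈ ℝ, β₁ = max_{i ≥ 2} |β_i| }. Then with respect to the sup-norm ‖α‖ = max_i |α_i|, the distance between C₁ and C₂ satisfies dist(C₁, C₂) ≥ (λ₁ − |λ₂|)/2. -/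
theorem stmt_14 (d : ℕ) (hd : 2 ≤ d) (l1 : ℝ) (l2 : ℂ)
    (h2 : 0 < ‖l2‖) (h1 : ‖l2‖ < l1)
    (C1 C2 : Set (Fin d → ℂ))
    (hd0 : 0 < d := by omega)
    (hC1 : C1 = {α | α ⟨0, hd0⟩ = (l1 : ℂ) ∧
      ∀ i : Fin d, i ≠ ⟨0, hd0⟩ → ‖α i‖ ≤ ‖l2‖})
    (hC2 : C2 = {β | (β ⟨0, hd0⟩).im = 0 ∧
      (β ⟨0, hd0⟩).re = ⨆ i : {i : Fin d // i ≠ ⟨0, hd0⟩}, ‖β i‖}) :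
    ∀ α ∈ C1, ∀ β ∈ C2, (l1 - ‖l2‖) / 2 ≤ ‖α - β‖ := by
  subst hC1 hC2
  rintro α ⟨ha0, hai⟩ β ⟨hb0, hb1⟩
  set δ := ‖α - β‖ with hδ
  have hne : Nonempty {i : Fin d // i ≠ ⟨0, hd0⟩} := by
    refine ⟨⟨⟨1, by omega⟩, ?_⟩⟩
    simp [Fin.ext_iff]
  have hcoord : ∀ i : Fin d, ‖α i - β i‖ ≤ δ := by
    intro i
    have := norm_le_pi_norm (α - β) i
    simpa using this
  -- β₀.re ≥ l1 - δ
  have h0 : l1 - δ ≤ (β ⟨0, hd0⟩).re := by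
    have h := hcoord ⟨0, hd0⟩
    have hre : |(α ⟨0, hd0⟩ - β ⟨0, hd0⟩).re| ≤ δ :=
      le_trans (Complex.abs_re_le_norm _) h
    rw [ha0] at hre
    simp only [Complex.sub_re, Complex.ofReal_re] at hre
    have := abs_le.mp hre
    linarith [this.1, this.2]
  -- sup ≤ |l2| + δ
  have hsup : (β ⟨0, hd0⟩).re ≤ ‖l2‖ + δ := by
    rw [hb1]
    refine ciSup_le fun i => ?_
    calc ‖β i.1‖ ≤ ‖α i.1‖ + ‖β i.1 - α i.1‖ := by
          have := norm_add_le (α i.1) (β i.1 - α i.1)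
          simpa using this
      _ ≤ ‖l2‖ + δ := by
          have h1' := hai i.1 i.2
          have h2' := hcoord i.1
          have : ‖β i.1 - α i.1‖ = ‖α i.1 - β i.1‖ := by
            exact norm_sub_rev _ _
          linarith [h1', h2', this ▸ h2']
  linarith
end

section
/- The roots of the quadratic X² − ((8n² + 48n + 73)/(4(n+4)²))·X + ((n+2)(2n+5)²)/(4(n+3)(n+4)²) in X are real and distinct for all n ≥ 1, and satisfy λ_{1,n} = 1 + (−2+√2)/n + O(1/n²) and λ_{2,n} = 1 − (2+√2)/n + O(1/n²) as n → ∞; in particular λ_{1,n} > λ_{2,n} > 0 for all sufficiently large n. -/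
open Filter Asymptotics

noncomputable def bb (x : ℝ) : ℝ := (8 * x ^ 2 + 48 * x + 73) / (4 * (x + 4) ^ 2)
noncomputable def cc (x : ℝ) : ℝ := ((x + 2) * (2 * x + 5) ^ 2) / (4 * (x + 3) * (x + 4) ^ 2)
noncomputable def DD (x : ℝ) : ℝ :=
  (128 * x ^ 3 + 1136 * x ^ 2 + 3313 * x + 3187) / (16 * (x + 3) * (x + 4) ^ 4)
noncomputable def L1 (n : ℕ) : ℝ := (bb n + Real.sqrt (DD n)) / 2
noncomputable def L2 (n : ℕ) : ℝ := (bb n - Real.sqrt (DD n)) / 2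

lemma DD_pos {x : ℝ} (hx : 0 ≤ x) : 0 < DD x := by
  unfold DD
  apply div_pos
  · nlinarith [pow_nonneg hx 3, sq_nonneg x]
  · have h4 : (0:ℝ) < x + 4 := by linarith
    have := pow_pos h4 4
    nlinarith

lemma cc_pos {x : ℝ} (hx : 0 ≤ x) : 0 < cc x := by
  unfold cc
  apply div_pos
  · nlinarith [sq_nonneg (2*x+5)]
  · nlinarith [sq_nonneg (x+4)]

lemma bb_pos {x : ℝ} (hx : 0 ≤ x) : 0 < bb x := by
  unfold bb
  apply div_pos
  · nlinarith [sq_nonneg x]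
  · nlinarith [sq_nonneg (x+4)]

lemma disc_eq {x : ℝ} (hx : 0 ≤ x) : bb x ^ 2 - 4 * cc x = DD x := by
  unfold bb cc DD
  have h3 : x + 3 ≠ 0 := by positivity
  have h4 : x + 4 ≠ 0 := by positivity
  field_simp
  ring

lemma bb_approx {x : ℝ} (hx : 1 ≤ x) : |bb x / 2 - (1 - 2 / x)| ≤ 42 / x ^ 2 := by
  have hx0 : (0:ℝ) < x := by linarith
  have hA : bb x / 2 - (1 - 2 / x) = (73 * x + 256) / (8 * x * (x + 4) ^ 2) := by
    unfold bb
    have h4 : x + 4 ≠ 0 := by positivity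
    field_simp
    ring
  rw [hA, abs_of_pos (by positivity), div_le_div_iff₀ (by positivity) (by positivity)]
  nlinarith [sq_nonneg x, pow_pos hx0 3]

lemma DD_hi {x : ℝ} (hx : 1 ≤ x) : DD x ≤ 8 / x ^ 2 := by
  have hx0 : (0:ℝ) < x := by linarith
  unfold DD
  rw [div_le_div_iff₀ (by positivity) (by positivity)]
  nlinarith [pow_nonneg hx0.le 1, pow_nonneg hx0.le 2, pow_nonneg hx0.le 3,
    pow_nonneg hx0.le 4, pow_nonneg hx0.le 5]

lemma DD_lo {x : ℝ} (hx : 1 ≤ x) : 8 / x ^ 2 - DD x ≤ 40000 / x ^ 3 := by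
  have hx0 : (0:ℝ) < x := by linarith
  have hE : 8 / x ^ 2 - DD x =
      (1296 * x ^ 4 + 15119 * x ^ 3 + 66445 * x ^ 2 + 131072 * x + 98304) /
        (16 * x ^ 2 * (x + 3) * (x + 4) ^ 4) := by
    unfold DD
    have h3 : x + 3 ≠ 0 := by positivity
    have h4 : x + 4 ≠ 0 := by positivity
    field_simp
    ring
  rw [hE, div_le_div_iff₀ (by positivity) (by positivity)]
  nlinarith [pow_nonneg hx0.le 2, pow_nonneg hx0.le 3, pow_nonneg hx0.le 4,
    pow_nonneg hx0.le 5, pow_nonneg hx0.le 6, pow_nonneg hx0.le 7]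

lemma sqrt_approx {x : ℝ} (hx : 1 ≤ x) :
    |Real.sqrt (DD x) - 2 * Real.sqrt 2 / x| ≤ 20000 / x ^ 2 := by
  have hx0 : (0:ℝ) < x := by linarith
  set s := Real.sqrt (DD x) with hs
  set u := Real.sqrt 2 with hu
  have hs0 : 0 ≤ s := Real.sqrt_nonneg _
  have hs2 : s ^ 2 = DD x := Real.sq_sqrt (DD_pos (by linarith)).le
  have hu2 : u ^ 2 = 2 := Real.sq_sqrt (by norm_num)
  have hu0 : 0 ≤ u := Real.sqrt_nonneg _
  have hu1 : 1 ≤ u := by nlinarith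
  set t := 2 * u / x with ht
  have ht0 : 0 ≤ t := by positivity
  have htle : 2 / x ≤ t := by
    rw [ht]
    gcongr
    linarith
  have ht2 : t ^ 2 = 8 / x ^ 2 := by
    rw [ht, div_pow, mul_pow, hu2]
    norm_num
  have habs : |s - t| * (s + t) ≤ 40000 / x ^ 3 := by
    have h1 : |s - t| * (s + t) = |s ^ 2 - t ^ 2| := by
      rw [← abs_of_nonneg (show (0:ℝ) ≤ s + t by linarith), ← abs_mul]
      congr 1
      ring
    rw [h1, hs2, ht2, abs_of_nonpos (by linarith [DD_hi hx])]
    linarith [DD_lo hx]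
  have h2x : |s - t| * (2 / x) ≤ 40000 / x ^ 3 := by
    have hst : 2 / x ≤ s + t := by linarith
    exact le_trans (mul_le_mul_of_nonneg_left hst (abs_nonneg _)) habs
  have hfin : |s - t| ≤ (40000 / x ^ 3) / (2 / x) :=
    (le_div_iff₀ (by positivity)).mpr h2x
  have heq : (40000 / x ^ 3) / (2 / x) = 20000 / x ^ 2 := by
    field_simp
    ring
  linarith [heq ▸ hfin]

lemma L2_pos (n : ℕ) : 0 < L2 n ∧ L2 n < L1 n := by
  have hx0 : (0:ℝ) ≤ n := Nat.cast_nonneg n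
  have hD := DD_pos hx0
  have hs0 : 0 ≤ Real.sqrt (DD n) := Real.sqrt_nonneg _
  have hs2 : Real.sqrt (DD n) ^ 2 = DD n := Real.sq_sqrt hD.le
  have hspos : 0 < Real.sqrt (DD n) := Real.sqrt_pos.mpr hD
  have hb := bb_pos hx0
  have hc := cc_pos hx0
  have hd := disc_eq hx0
  constructor
  · simp only [L2]
    nlinarith
  · simp only [L1, L2]
    linarith

theorem stmt_17 : ∃ l1 l2 : ℕ → ℝ,
    (∀ n : ℕ, 1 ≤ n → l1 n ≠ l2 n ∧
      (∀ x : ℝ, x ^ 2 - ((8 * (n : ℝ) ^ 2 + 48 * (n : ℝ) + 73) / (4 * ((n : ℝ) + 4) ^ 2)) * x +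
          (((n : ℝ) + 2) * (2 * (n : ℝ) + 5) ^ 2) / (4 * ((n : ℝ) + 3) * ((n : ℝ) + 4) ^ 2) = 0 ↔
        x = l1 n ∨ x = l2 n)) ∧
    (fun n : ℕ => l1 n - (1 + (-2 + Real.sqrt 2) / (n : ℝ))) =O[atTop]
      (fun n : ℕ => 1 / (n : ℝ) ^ 2) ∧
    (fun n : ℕ => l2 n - (1 - (2 + Real.sqrt 2) / (n : ℝ))) =O[atTop]
      (fun n : ℕ => 1 / (n : ℝ) ^ 2) ∧
    (∀ᶠ n in atTop, 0 < l2 n ∧ l2 n < l1 n) := by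
  refine ⟨L1, L2, ?_, ?_, ?_, ?_⟩
  · intro n hn
    have hx0 : (0:ℝ) ≤ n := Nat.cast_nonneg n
    have hD := DD_pos hx0
    have hs2 : Real.sqrt (DD n) ^ 2 = DD n := Real.sq_sqrt hD.le
    have hspos : 0 < Real.sqrt (DD n) := Real.sqrt_pos.mpr hD
    have hd := disc_eq hx0
    constructor
    · simp only [L1, L2]
      intro h
      linarith
    · intro x
      have key : x ^ 2 - bb n * x + cc n = (x - L1 n) * (x - L2 n) := by
        simp only [L1, L2]
        linear_combination (hs2 - hd) / 4
      show x ^ 2 - bb n * x + cc n = 0 ↔ x = L1 n ∨ x = L2 n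
      rw [key, mul_eq_zero, sub_eq_zero, sub_eq_zero]
  · rw [isBigO_iff]
    refine ⟨20100, ?_⟩
    filter_upwards [eventually_ge_atTop 1] with n hn
    have hx : (1:ℝ) ≤ n := by exact_mod_cast hn
    have hx0 : (0:ℝ) < n := by linarith
    have hA := bb_approx hx
    have hB := sqrt_approx hx
    have hdecomp : L1 n - (1 + (-2 + Real.sqrt 2) / (n:ℝ)) =
        (bb n / 2 - (1 - 2 / (n:ℝ))) + (Real.sqrt (DD n) - 2 * Real.sqrt 2 / (n:ℝ)) / 2 := by
      simp only [L1]
      ring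
    rw [Real.norm_eq_abs, Real.norm_eq_abs, hdecomp]
    have h1 : |(bb n / 2 - (1 - 2 / (n:ℝ))) + (Real.sqrt (DD n) - 2 * Real.sqrt 2 / (n:ℝ)) / 2|
        ≤ |bb n / 2 - (1 - 2 / (n:ℝ))| + |Real.sqrt (DD n) - 2 * Real.sqrt 2 / (n:ℝ)| / 2 := by
      calc _ ≤ |bb n / 2 - (1 - 2 / (n:ℝ))| + |(Real.sqrt (DD n) - 2 * Real.sqrt 2 / (n:ℝ)) / 2| :=
            abs_add_le _ _
        _ = _ := by rw [abs_div]; norm_num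
    have h2 : |1 / (n:ℝ) ^ 2| = 1 / (n:ℝ) ^ 2 := abs_of_pos (by positivity)
    rw [h2, mul_one_div]
    have h3 : 42 / (n:ℝ) ^ 2 + (20000 / (n:ℝ) ^ 2) / 2 = 10042 / (n:ℝ) ^ 2 := by ring
    have h4 : (10042:ℝ) / (n:ℝ) ^ 2 ≤ 20100 / (n:ℝ) ^ 2 :=
      (div_le_div_iff_of_pos_right (pow_pos hx0 2)).mpr (by norm_num)
    linarith
  · rw [isBigO_iff]
    refine ⟨20100, ?_⟩
    filter_upwards [eventually_ge_atTop 1] with n hn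
    have hx : (1:ℝ) ≤ n := by exact_mod_cast hn
    have hx0 : (0:ℝ) < n := by linarith
    have hA := bb_approx hx
    have hB := sqrt_approx hx
    have hdecomp : L2 n - (1 - (2 + Real.sqrt 2) / (n:ℝ)) =
        (bb n / 2 - (1 - 2 / (n:ℝ))) - (Real.sqrt (DD n) - 2 * Real.sqrt 2 / (n:ℝ)) / 2 := by
      simp only [L2]
      ring
    rw [Real.norm_eq_abs, Real.norm_eq_abs, hdecomp]
    have h1 : |(bb n / 2 - (1 - 2 / (n:ℝ))) - (Real.sqrt (DD n) - 2 * Real.sqrt 2 / (n:ℝ)) / 2|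
        ≤ |bb n / 2 - (1 - 2 / (n:ℝ))| + |Real.sqrt (DD n) - 2 * Real.sqrt 2 / (n:ℝ)| / 2 := by
      calc _ ≤ |bb n / 2 - (1 - 2 / (n:ℝ))| + |(Real.sqrt (DD n) - 2 * Real.sqrt 2 / (n:ℝ)) / 2| :=
            abs_sub _ _
        _ = _ := by rw [abs_div]; norm_num
    have h2 : |1 / (n:ℝ) ^ 2| = 1 / (n:ℝ) ^ 2 := abs_of_pos (by positivity)
    rw [h2, mul_one_div]
    have h3 : 42 / (n:ℝ) ^ 2 + (20000 / (n:ℝ) ^ 2) / 2 = 10042 / (n:ℝ) ^ 2 := by ring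
    have h4 : (10042:ℝ) / (n:ℝ) ^ 2 ≤ 20100 / (n:ℝ) ^ 2 :=
      (div_le_div_iff_of_pos_right (pow_pos hx0 2)).mpr (by norm_num)
    linarith
  · exact Filter.Eventually.of_forall L2_pos
end

section
/- Let A be a real d×d matrix admitting an invertible real matrix T with T⁻¹AT = diag(λ₁, λ₂, …, λ_d) where λ₁ > |λ_i| for all i ≥ 2 (the λ_i possibly complex, T with appropriate conjugate-pair real structure). Define K = T·C where C = { α : α₁ ≥ |α_i| for all i, with conjugacy/reality constraints making Tα real }. Then A(K \ {0}) ⊆ interior(K). -/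
open Matrix in
theorem stmt_19 (d : ℕ) (hd : 0 < d) (A : Matrix (Fin d) (Fin d) ℝ)
    (T : Matrix (Fin d) (Fin d) ℂ) (hT : IsUnit T.det)
    (lam : Fin d → ℂ)
    (hdiag : T⁻¹ * A.map (Complex.ofReal) * T = Matrix.diagonal lam)
    (l1 : ℝ) (hl1 : lam ⟨0, hd⟩ = (l1 : ℂ))
    (hdom : ∀ i : Fin d, i ≠ ⟨0, hd⟩ → ‖lam i‖ < l1)
    (K : Set (Fin d → ℝ))
    (hK : K = {x | ∃ α : Fin d → ℂ,
      T.mulVec α = (fun ℓ => ((x ℓ : ℝ) : ℂ)) ∧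
      (α ⟨0, hd⟩).im = 0 ∧
      ∀ i : Fin d, i ≠ ⟨0, hd⟩ → ‖α i‖ ≤ (α ⟨0, hd⟩).re}) :
    ∀ x ∈ K, x ≠ 0 → A.mulVec x ∈ interior K := by
  subst hK
  intro x hx hx0
  set z0 : Fin d := ⟨0, hd⟩ with hz0
  set B : Matrix (Fin d) (Fin d) ℂ := A.map Complex.ofReal with hB
  have hTT' : T * T⁻¹ = 1 := Matrix.mul_nonsing_inv T hT
  have hT'T : T⁻¹ * T = 1 := Matrix.nonsing_inv_mul T hT
  -- basic algebraic consequences of the diagonalization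
  have hBeq : T⁻¹ * B = Matrix.diagonal lam * T⁻¹ := by
    have h := congrArg (· * T⁻¹) hdiag
    simpa [Matrix.mul_assoc, hTT'] using h
  have hBT : B * T = T * Matrix.diagonal lam := by
    have h := congrArg (T * ·) hdiag
    simp only [← Matrix.mul_assoc, hTT', Matrix.one_mul] at h
    exact h
  -- coe of real mulVec
  have hcoe : ∀ (w : Fin d → ℝ),
      (fun ℓ => ((A.mulVec w ℓ : ℝ) : ℂ)) = B.mulVec (fun ℓ => ((w ℓ : ℝ) : ℂ)) := by
    intro w
    funext i
    simp only [Matrix.mulVec, dotProduct, hB, Matrix.map_apply]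
    push_cast
    rfl
  -- the distinguished left eigenvector u = row z0 of T⁻¹
  have hu : ∀ ℓ, (∑ k, T⁻¹ z0 k * B k ℓ) = (l1 : ℂ) * T⁻¹ z0 ℓ := by
    intro ℓ
    have h := congrFun (congrFun hBeq z0) ℓ
    rw [Matrix.diagonal_mul, hl1] at h
    rw [Matrix.mul_apply] at h
    exact h
  set w : Fin d → ℂ := fun ℓ => (starRingEnd ℂ) (T⁻¹ z0 ℓ) with hwdef
  have hw : w ᵥ* B = fun ℓ => (l1 : ℂ) * w ℓ := by
    funext ℓ
    have h1 := congrArg (starRingEnd ℂ) (hu ℓ)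
    simp only [map_sum, _root_.map_mul, hB, Matrix.map_apply, Complex.conj_ofReal] at h1
    simpa [Matrix.vecMul, dotProduct, hB, Matrix.map_apply, hwdef] using h1
  -- w ᵥ* T is supported on z0
  have hwT : ∀ i, i ≠ z0 → (w ᵥ* T) i = 0 := by
    intro i hi
    have h2 : (w ᵥ* B) ᵥ* T = w ᵥ* (T * Matrix.diagonal lam) := by
      rw [Matrix.vecMul_vecMul, hBT]
    rw [hw] at h2
    have h3 := congrFun h2 i
    have hlhs : (fun ℓ => (l1 : ℂ) * w ℓ) ᵥ* T = fun j => (l1 : ℂ) * (w ᵥ* T) j := by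
      funext j
      simp [Matrix.vecMul, dotProduct, Finset.mul_sum, mul_assoc]
    have hrhs : w ᵥ* (T * Matrix.diagonal lam) = fun j => (w ᵥ* T) j * lam j := by
      rw [← Matrix.vecMul_vecMul]
      funext j
      rw [Matrix.vecMul_diagonal]
    rw [hlhs, hrhs] at h3
    have h4 : (l1 : ℂ) * (w ᵥ* T) i = (w ᵥ* T) i * lam i := h3
    have hne : lam i ≠ (l1 : ℂ) := by
      intro he
      have := hdom i hi
      rw [he] at this
      simp only [Complex.norm_real, Real.norm_eq_abs] at this
      exact absurd this (not_lt.mpr (le_abs_self l1))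
    by_contra h0
    apply hne
    have : (w ᵥ* T) i * lam i = (w ᵥ* T) i * (l1 : ℂ) := by
      rw [← h4]; ring
    exact (mul_left_cancel₀ h0 this)
  set c : ℂ := (w ᵥ* T) z0 with hcdef
  have hconj : ∀ ℓ, (starRingEnd ℂ) (T⁻¹ z0 ℓ) = c * T⁻¹ z0 ℓ := by
    intro ℓ
    have hw' : w = (w ᵥ* T) ᵥ* T⁻¹ := by rw [Matrix.vecMul_vecMul, hTT', Matrix.vecMul_one]
    have h : w ℓ = ∑ i, (w ᵥ* T) i * T⁻¹ i ℓ := congrFun hw' ℓ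
    rw [Finset.sum_eq_single z0 (fun i _ hi => by rw [hwT i hi, zero_mul])
      (fun h => absurd (Finset.mem_univ z0) h)] at h
    exact h
  -- extract the witness for x
  obtain ⟨α, hα, him, hle⟩ := hx
  have hαx : α = T⁻¹.mulVec (fun ℓ => ((x ℓ : ℝ) : ℂ)) := by
    rw [← hα, Matrix.mulVec_mulVec, hT'T, Matrix.one_mulVec]
  set a : ℝ := (α z0).re with hadef
  have hα0 : α z0 = (a : ℝ) := by
    rw [Complex.ext_iff]
    constructor
    · simp [hadef]
    · simp [him]
  have hαne : α z0 ≠ 0 := by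
    intro h0
    apply hx0
    have hαzero : α = 0 := by
      funext i
      by_cases hi : i = z0
      · rw [hi, h0]; rfl
      · have h1 := hle i hi
        have ha0 : a = 0 := by rw [hadef, h0]; rfl
        rw [ha0] at h1
        have h2 : ‖α i‖ = 0 := le_antisymm h1 (norm_nonneg _)
        simpa using h2
    rw [hαzero] at hα
    funext ℓ
    have := congrFun hα ℓ
    simp only [Matrix.mulVec_zero] at this
    exact_mod_cast (congrArg Complex.re this.symm)
  have ha : a ≠ 0 := fun h => hαne (by rw [hα0, h]; simp)
  -- c = 1, hence u is a real row vector
  have hc1 : c = 1 := by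
    have hαz0 : α z0 = ∑ ℓ, T⁻¹ z0 ℓ * ((x ℓ : ℝ) : ℂ) := by
      rw [hαx]; rfl
    have h1 : (starRingEnd ℂ) (α z0) = c * α z0 := by
      rw [hαz0, map_sum]
      rw [Finset.mul_sum]
      congr 1
      funext ℓ
      rw [_root_.map_mul, Complex.conj_ofReal, hconj ℓ, mul_assoc]
    rw [hα0] at h1
    rw [Complex.conj_ofReal] at h1
    have h2 : (1 : ℂ) * (a : ℂ) = c * (a : ℂ) := by rw [one_mul]; exact h1
    exact (mul_right_cancel₀ (by exact_mod_cast ha) h2).symm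
  have huim : ∀ ℓ, (T⁻¹ z0 ℓ).im = 0 := by
    intro ℓ
    have := hconj ℓ
    rw [hc1, one_mul] at this
    exact Complex.conj_eq_iff_im.mp this
  -- the key map G and the open set U
  set G : (Fin d → ℝ) → (Fin d → ℂ) :=
    fun z => T⁻¹.mulVec (fun ℓ => ((z ℓ : ℝ) : ℂ)) with hG
  have hGapp : ∀ z i, G z i = ∑ ℓ, T⁻¹ i ℓ * ((z ℓ : ℝ) : ℂ) := by
    intro z i; rfl
  have hGim : ∀ z : Fin d → ℝ, (G z z0).im = 0 := by
    intro z
    rw [hGapp, Complex.im_sum]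
    apply Finset.sum_eq_zero
    intro ℓ _
    simp [Complex.mul_im, huim ℓ]
  have hGcont : Continuous G := by
    apply continuous_pi
    intro i
    have : (fun z => G z i) = fun z => ∑ ℓ, T⁻¹ i ℓ * ((z ℓ : ℝ) : ℂ) := by
      funext z; exact hGapp z i
    rw [this]
    exact continuous_finset_sum _ fun ℓ _ =>
      continuous_const.mul (Complex.continuous_ofReal.comp (continuous_apply ℓ))
  set U : Set (Fin d → ℝ) :=
    {z | ∀ i, i ≠ z0 → ‖G z i‖ < (G z z0).re} with hU
  have hUopen : IsOpen U := by
    have hUeq : U = ⋂ i ∈ (Finset.univ.erase z0),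
        {z | ‖G z i‖ < (G z z0).re} := by
      ext z
      simp [hU, Set.mem_iInter]
    rw [hUeq]
    apply isOpen_biInter_finset
    intro i _
    exact isOpen_lt
      (continuous_norm.comp ((continuous_apply i).comp hGcont))
      (Complex.continuous_re.comp ((continuous_apply z0).comp hGcont))
  have hUK : U ⊆ {x | ∃ α : Fin d → ℂ,
      T.mulVec α = (fun ℓ => ((x ℓ : ℝ) : ℂ)) ∧
      (α z0).im = 0 ∧
      ∀ i : Fin d, i ≠ z0 → ‖α i‖ ≤ (α z0).re} := by
    intro z hz
    refine ⟨G z, ?_, hGim z, fun i hi => le_of_lt (hz i hi)⟩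
    rw [hG]
    simp only []
    rw [Matrix.mulVec_mulVec, hTT', Matrix.one_mulVec]
  -- compute G (A *ᵥ x)
  have hGy : G (A.mulVec x) = fun i => lam i * α i := by
    rw [hG]
    simp only []
    rw [hcoe x, ← hα, Matrix.mulVec_mulVec, Matrix.mulVec_mulVec, hdiag]
    funext i
    rw [Matrix.mulVec_diagonal]
  -- a > 0 when needed, and membership of A *ᵥ x in U
  have hyU : A.mulVec x ∈ U := by
    intro i hi
    have hapos : 0 < a := by
      have h1 : 0 ≤ a := le_trans (norm_nonneg _) (hle i hi)
      exact lt_of_le_of_ne h1 (Ne.symm ha)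
    rw [hGy]
    simp only []
    rw [hl1, hα0]
    have hre : ((l1 : ℂ) * (a : ℂ)).re = l1 * a := by
      rw [← Complex.ofReal_mul, Complex.ofReal_re]
    rw [hre, norm_mul]
    calc ‖lam i‖ * ‖α i‖
        ≤ ‖lam i‖ * a :=
          mul_le_mul_of_nonneg_left (hle i hi) (norm_nonneg _)
      _ < l1 * a := mul_lt_mul_of_pos_right (hdom i hi) hapos
  exact interior_maximal hUK hUopen hyU
end
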